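/- arXiv:1608.05542 — 2 statements merged into one kernel-verified Lean document; each statement's English description precedes it below -/
import Mathlib

section
/- Let V be a finite-dimensional complex vector space, V₀ ⊆ V a subspace, h₀ a positive semidefinite hermitian form on V₀ with null space N. Let (W₀, h*) be the dual singular hermitian form associated to (V₀, h₀), where W₀ = N° ⊆ V*, and let (U₀, h**) be the dual singular hermitian form associated to (W₀, h*) inside V**, i.e. U₀ = M° ⊆ V** where M is the null space of h*. Let ev : V → V** denote the canonical evaluation isomorphism. Then: (i) ev⁻¹(U₀) = V₀; (ii) ev⁻¹ of the null space of h** equals N; and (iii) h**(ev(x), ev(y)) = h₀(x, y) for all x, y ∈ V₀. In other words, the double dual singular hermitian form coincides with the original one under the natural isomorphism V ≅ V**. -/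
/-- The annihilator of a subset `S ⊆ V` inside the dual space `V*`:
`S° = {η ∈ V* : η(x) = 0 for all x ∈ S}`. -/
def setAnnihilator {V : Type*} [AddCommGroup V] [Module ℂ V] (S : Set V) :
    Submodule ℂ (Module.Dual ℂ V) where
  carrier := {η | ∀ x ∈ S, η x = 0}
  add_mem' := by
    intro a b ha hb x hx
    simp [LinearMap.add_apply, ha x hx, hb x hx]
  zero_mem' := by
    intro x hx
    simp
  smul_mem' := by
    intro c a ha x hx
    simp [LinearMap.smul_apply, ha x hx]

/-- `(W₀, hstar)` is *the dual singular hermitian form* associated to the positive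
semidefinite hermitian form `h₀` on the subspace `V₀ ⊆ V`:  `W₀ = N°` is the annihilator
of the null space `N = {x ∈ V₀ : h₀(x,x) = 0}` of `h₀`, and `hstar` is the dual inner
product of the (positive definite) form induced by `h₀` on `V₀/N`, transported to `W₀`
via `η ↦ η̃`, `η̃(x+N) = η(x)`.  Concretely, this means: whenever `η, η' ∈ W₀` restrict on
`V₀` to the functionals `h₀(·, v)` and `h₀(·, v')` respectively (such representatives
exist in the finite-dimensional case), one has `hstar(η, η') = h₀(v', v)`. -/
def IsDualSingularForm {V : Type*} [AddCommGroup V] [Module ℂ V]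
    (V₀ : Submodule ℂ V) (h₀ : V₀ → V₀ → ℂ)
    (W₀ : Submodule ℂ (Module.Dual ℂ V)) (hstar : W₀ → W₀ → ℂ) : Prop :=
  W₀ = setAnnihilator (Subtype.val '' {x : V₀ | h₀ x x = 0}) ∧
  ∀ (η η' : W₀) (v v' : V₀),
    (∀ x : V₀, (η : Module.Dual ℂ V) x = h₀ x v) →
    (∀ x : V₀, (η' : Module.Dual ℂ V) x = h₀ x v') →
    hstar η η' = h₀ v' v

open Module

namespace ChernAux

variable {E : Type*} [AddCommGroup E] [Module ℂ E]

lemma add_right (h : E → E → ℂ)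
    (hadd : ∀ x x' y, h (x + x') y = h x y + h x' y)
    (hconj : ∀ x y, h y x = starRingEnd ℂ (h x y)) (x y y' : E) :
    h x (y + y') = h x y + h x y' := by
  rw [hconj, hadd, map_add, ← hconj, ← hconj]

lemma smul_right (h : E → E → ℂ)
    (hsmul : ∀ (c : ℂ) (x y), h (c • x) y = c * h x y)
    (hconj : ∀ x y, h y x = starRingEnd ℂ (h x y)) (c : ℂ) (x y : E) :
    h x (c • y) = starRingEnd ℂ c * h x y := by
  rw [hconj, hsmul, map_mul, ← hconj]

lemma zero_left (h : E → E → ℂ)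
    (hsmul : ∀ (c : ℂ) (x y), h (c • x) y = c * h x y) (y : E) :
    h 0 y = 0 := by
  have := hsmul 0 0 y
  simpa using this

lemma zero_right (h : E → E → ℂ)
    (hsmul : ∀ (c : ℂ) (x y), h (c • x) y = c * h x y)
    (hconj : ∀ x y, h y x = starRingEnd ℂ (h x y)) (x : E) :
    h x 0 = 0 := by
  rw [hconj, zero_left h hsmul, map_zero]

/-- For a positive semidefinite hermitian form, a null vector pairs to zero with
every vector (Cauchy–Schwarz degenerate case). -/
lemma herm_null (h : E → E → ℂ)
    (hadd : ∀ x x' y, h (x + x') y = h x y + h x' y)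
    (hsmul : ∀ (c : ℂ) (x y), h (c • x) y = c * h x y)
    (hconj : ∀ x y, h y x = starRingEnd ℂ (h x y))
    (hpsd : ∀ x, 0 ≤ (h x x).re)
    (x : E) (hx : h x x = 0) (y : E) : h y x = 0 := by
  by_contra ha
  have haddr := add_right h hadd hconj
  have hsmulr := smul_right h hsmul hconj
  set a := h y x with ha_def
  set s := Complex.normSq a with hs_def
  have hs : 0 < s := Complex.normSq_pos.mpr ha
  set B := (h y y).re with hB_def
  have hB0 : 0 ≤ B := hpsd y
  set r : ℝ := 1 / (1 + B) with hr_def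
  have h1B : (0:ℝ) < 1 + B := by linarith
  have hr : 0 < r := by positivity
  have hrB : r * (1 + B) = 1 := by
    rw [hr_def]; field_simp
  set c : ℂ := ((-r : ℝ) : ℂ) * starRingEnd ℂ a with hc
  have expand : h (c • y + x) (c • y + x)
      = c * starRingEnd ℂ c * h y y + c * a + starRingEnd ℂ c * starRingEnd ℂ a := by
    rw [hadd, haddr, haddr, hsmul, hsmulr, hsmul, hsmulr, hx, hconj y x, ← ha_def]
    ring
  have hca : c * a = ((-(r * s) : ℝ) : ℂ) := by
    rw [hc]
    rw [mul_assoc, mul_comm (starRingEnd ℂ a) a, Complex.mul_conj]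
    push_cast
    ring
  have hcc : c * starRingEnd ℂ c = ((r^2 * s : ℝ) : ℂ) := by
    rw [Complex.mul_conj]
    congr 1
    rw [hc, Complex.normSq_mul, Complex.normSq_conj, Complex.normSq_ofReal]
    ring
  have hcaca : starRingEnd ℂ c * starRingEnd ℂ a = ((-(r * s) : ℝ) : ℂ) := by
    rw [← map_mul, hca]
    simp
  have hre : (h (c • y + x) (c • y + x)).re = r^2 * s * B - 2 * (r * s) := by
    rw [expand, hca, hcc, hcaca, Complex.add_re, Complex.add_re, Complex.mul_re,
      Complex.ofReal_re, Complex.ofReal_im, ← hB_def]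
    simp only [Complex.ofReal_neg, Complex.neg_re, Complex.ofReal_re]
    ring
  have hz := hpsd (c • y + x)
  rw [hre] at hz
  nlinarith [mul_pos hr hs, mul_nonneg (mul_nonneg hr.le hs.le) hB0]

lemma herm_null' (h : E → E → ℂ)
    (hadd : ∀ x x' y, h (x + x') y = h x y + h x' y)
    (hsmul : ∀ (c : ℂ) (x y), h (c • x) y = c * h x y)
    (hconj : ∀ x y, h y x = starRingEnd ℂ (h x y))
    (hpsd : ∀ x, 0 ≤ (h x x).re)
    (x : E) (hx : h x x = 0) (y : E) : h x y = 0 := by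
  rw [hconj, herm_null h hadd hsmul hconj hpsd x hx y, map_zero]

lemma finrank_restrictScalars_real {M : Type*} [AddCommGroup M] [Module ℂ M]
    (p : Submodule ℂ M) :
    finrank ℝ (p.restrictScalars ℝ) = finrank ℝ p :=
  LinearEquiv.finrank_eq
    { toFun := fun x => ⟨x.1, x.2⟩
      invFun := fun x => ⟨x.1, x.2⟩
      map_add' := fun _ _ => rfl
      map_smul' := fun _ _ => rfl
      left_inv := fun _ => rfl
      right_inv := fun _ => rfl }

/-- Every `ℂ`-linear functional on a f.d. space vanishing on the "radical" of a hermitian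
form is represented as `h (·) v`. -/
lemma exists_rep {E : Type*} [AddCommGroup E] [Module ℂ E] [FiniteDimensional ℂ E]
    (h : E → E → ℂ)
    (hadd : ∀ x x' y, h (x + x') y = h x y + h x' y)
    (hsmul : ∀ (c : ℂ) (x y), h (c • x) y = c * h x y)
    (hconj : ∀ x y, h y x = starRingEnd ℂ (h x y))
    (f : Module.Dual ℂ E)
    (hf : ∀ z : E, (∀ w : E, h w z = 0) → f z = 0) :
    ∃ v : E, ∀ x : E, f x = h x v := by
  haveI : FiniteDimensional ℝ E := Module.Finite.trans ℂ E
  have haddr := add_right h hadd hconj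
  have hsmulr := smul_right h hsmul hconj
  set N : Submodule ℂ E :=
    { carrier := {v | ∀ z : E, h z v = 0}
      add_mem' := fun {a b} ha hb z => by rw [haddr, ha z, hb z, add_zero]
      zero_mem' := fun z => by
        have := hsmulr 0 z 0
        simpa using this
      smul_mem' := fun c {v} hv z => by rw [hsmulr, hv z, mul_zero] } with hN
  set Φ : E →ₗ[ℝ] Module.Dual ℂ E :=
    { toFun := fun v =>
        { toFun := fun z => h z v
          map_add' := fun a b => hadd a b v
          map_smul' := fun c a => hsmul c a v }
      map_add' := fun v v' => LinearMap.ext fun z => haddr z v v'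
      map_smul' := fun r v => LinearMap.ext fun z => by
        show h z (r • v) = (r : ℂ) * h z v
        rw [show r • v = ((r : ℂ)) • v from (algebraMap_smul ℂ r v).symm, hsmulr,
          Complex.conj_ofReal] } with hΦ
  have hker : LinearMap.ker Φ = N.restrictScalars ℝ := by
    ext v
    simp only [LinearMap.mem_ker, Submodule.restrictScalars_mem]
    constructor
    · intro hv z
      have := congrArg (fun g : Module.Dual ℂ E => g z) hv
      simpa [hΦ] using this
    · intro hv
      apply LinearMap.ext
      intro z
      simpa [hΦ] using hv z
  have hle : LinearMap.range Φ ≤ (N.dualAnnihilator).restrictScalars ℝ := by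
    rintro g ⟨v, rfl⟩
    simp only [Submodule.restrictScalars_mem, Submodule.mem_dualAnnihilator]
    intro z hz
    have : h v z = 0 := hz v
    show h z v = 0
    rw [hconj, this, map_zero]
  have e1 : finrank ℝ E = 2 * finrank ℂ E := by
    rw [← Module.finrank_mul_finrank ℝ ℂ E, Complex.finrank_real_complex]
  have e2 : finrank ℝ N = 2 * finrank ℂ N := by
    rw [← Module.finrank_mul_finrank ℝ ℂ N, Complex.finrank_real_complex]
  have e3 : finrank ℝ N.dualAnnihilator = 2 * finrank ℂ N.dualAnnihilator := by
    rw [← Module.finrank_mul_finrank ℝ ℂ N.dualAnnihilator, Complex.finrank_real_complex]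
  have e4 : finrank ℂ N.dualAnnihilator + finrank ℂ N = finrank ℂ E := by
    rw [← LinearEquiv.finrank_eq (Subspace.quotEquivAnnihilator N),
      Submodule.finrank_quotient_add_finrank]
  have ern : finrank ℝ (LinearMap.range Φ) + finrank ℝ (LinearMap.ker Φ) = finrank ℝ E :=
    LinearMap.finrank_range_add_finrank_ker Φ
  have eker : finrank ℝ (LinearMap.ker Φ) = finrank ℝ N := by
    rw [hker]
    exact finrank_restrictScalars_real N
  have eann : finrank ℝ ((N.dualAnnihilator).restrictScalars ℝ) = finrank ℝ N.dualAnnihilator :=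
    finrank_restrictScalars_real N.dualAnnihilator
  have hrangeeq : LinearMap.range Φ = (N.dualAnnihilator).restrictScalars ℝ := by
    apply Submodule.eq_of_le_of_finrank_eq hle
    omega
  have hfmem : f ∈ (N.dualAnnihilator).restrictScalars ℝ := by
    simp only [Submodule.restrictScalars_mem, Submodule.mem_dualAnnihilator]
    intro z hz
    exact hf z hz
  rw [← hrangeeq] at hfmem
  obtain ⟨v, hv⟩ := hfmem
  refine ⟨v, fun x => ?_⟩
  have := congrArg (fun g : Module.Dual ℂ E => g x) hv
  simpa [hΦ] using this.symm

lemma exists_ext {V : Type*} [AddCommGroup V] [Module ℂ V]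
    (V₀ : Submodule ℂ V) (h₀ : V₀ → V₀ → ℂ)
    (hadd : ∀ x x' y, h₀ (x + x') y = h₀ x y + h₀ x' y)
    (hsmul : ∀ (c : ℂ) (x y), h₀ (c • x) y = c * h₀ x y) (v : V₀) :
    ∃ η : Module.Dual ℂ V, ∀ x : V₀, η x = h₀ x v := by
  set f : V₀ →ₗ[ℂ] ℂ :=
    { toFun := fun z => h₀ z v
      map_add' := fun a b => hadd a b v
      map_smul' := fun c a => hsmul c a v } with hf
  obtain ⟨g, hg⟩ := f.exists_extend
  refine ⟨g, fun x => ?_⟩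
  have := congrArg (fun F : V₀ →ₗ[ℂ] ℂ => F x) hg
  simpa [hf] using this

end ChernAux
lemma mem_setAnnihilator {V : Type*} [AddCommGroup V] [Module ℂ V] (S : Set V)
    (η : Module.Dual ℂ V) : η ∈ setAnnihilator S ↔ ∀ x ∈ S, η x = 0 := Iff.rfl


/-- Let `V` be a finite-dimensional complex vector space, `V₀ ⊆ V` a subspace, `h₀` a
positive semidefinite hermitian form on `V₀` with null space `N`, `(W₀, h*)` the dual
singular hermitian form associated to `(V₀, h₀)` inside `V*`, and `(U₀, h**)` the dual
singular hermitian form associated to `(W₀, h*)` inside `V**` (so `U₀ = M°` where `M` is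
the null space of `h*`).  Let `ev : V → V**` be the canonical evaluation map.  Then:
(i) `ev⁻¹(U₀) = V₀`; (ii) `ev⁻¹` of the null space of `h**` equals `N`; and
(iii) `h**(ev x, ev y) = h₀(x, y)` for all `x, y ∈ V₀`.  That is, the double dual
singular hermitian form coincides with the original one under `V ≅ V**`. -/
theorem chern_stmt6 (V : Type*) [AddCommGroup V] [Module ℂ V] [FiniteDimensional ℂ V]
    (V₀ : Submodule ℂ V) (h₀ : V₀ → V₀ → ℂ)
    (hadd : ∀ x x' y, h₀ (x + x') y = h₀ x y + h₀ x' y)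
    (hsmul : ∀ (c : ℂ) (x y), h₀ (c • x) y = c * h₀ x y)
    (hconj : ∀ x y, h₀ y x = starRingEnd ℂ (h₀ x y))
    (hpsd : ∀ x, 0 ≤ (h₀ x x).re)
    (W₀ : Submodule ℂ (Module.Dual ℂ V)) (hstar : W₀ → W₀ → ℂ)
    (hdual : IsDualSingularForm V₀ h₀ W₀ hstar)
    (U₀ : Submodule ℂ (Module.Dual ℂ (Module.Dual ℂ V))) (hss : U₀ → U₀ → ℂ)
    (hdual2 : IsDualSingularForm W₀ hstar U₀ hss) :
    (∀ x : V, Module.Dual.eval ℂ V x ∈ U₀ ↔ x ∈ V₀) ∧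
    ({x : V | ∃ hx : Module.Dual.eval ℂ V x ∈ U₀,
        hss ⟨Module.Dual.eval ℂ V x, hx⟩ ⟨Module.Dual.eval ℂ V x, hx⟩ = 0}
      = Subtype.val '' {x₀ : V₀ | h₀ x₀ x₀ = 0}) ∧
    (∀ (x y : V₀) (hx : Module.Dual.eval ℂ V (x : V) ∈ U₀)
        (hy : Module.Dual.eval ℂ V (y : V) ∈ U₀),
      hss ⟨Module.Dual.eval ℂ V (x : V), hx⟩ ⟨Module.Dual.eval ℂ V (y : V), hy⟩ = h₀ x y) := by
  obtain ⟨hW, hstarspec⟩ := hdual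
  obtain ⟨hU, hssspec⟩ := hdual2
  -- membership in W₀
  have memW : ∀ η : Module.Dual ℂ V, η ∈ W₀ ↔ ∀ x : V₀, h₀ x x = 0 → η x = 0 := by
    intro η
    rw [hW, mem_setAnnihilator]
    constructor
    · intro hη x hx
      exact hη x ⟨x, hx, rfl⟩
    · rintro hη _ ⟨x, hx, rfl⟩
      exact hη x hx
  -- Riesz representatives for elements of W₀
  have rep : ∀ η : W₀, ∃ v : V₀, ∀ x : V₀, (η : Module.Dual ℂ V) x = h₀ x v := by
    intro η
    have hf : ∀ z : V₀, (∀ w : V₀, h₀ w z = 0) →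
        ((η : Module.Dual ℂ V).comp V₀.subtype) z = 0 := by
      intro z hz
      exact (memW η).1 η.2 z (hz z)
    obtain ⟨v, hv⟩ := ChernAux.exists_rep h₀ hadd hsmul hconj
      ((η : Module.Dual ℂ V).comp V₀.subtype) hf
    exact ⟨v, fun x => hv x⟩
  -- extensions: every `h₀ (·) v` is the restriction of some element of W₀
  have extW : ∀ v : V₀, ∃ η : W₀, ∀ x : V₀, (η : Module.Dual ℂ V) x = h₀ x v := by
    intro v
    obtain ⟨η, hη⟩ := ChernAux.exists_ext V₀ h₀ hadd hsmul v
    have hmem : η ∈ W₀ := (memW η).2 (fun x hx => by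
      rw [hη x, ChernAux.herm_null' h₀ hadd hsmul hconj hpsd x hx v])
    exact ⟨⟨η, hmem⟩, hη⟩
  -- null space of hstar
  have Mnull : ∀ η : W₀, hstar η η = 0 ↔ ∀ x : V₀, (η : Module.Dual ℂ V) x = 0 := by
    intro η
    constructor
    · intro h0 x
      obtain ⟨v, hv⟩ := rep η
      have hvv : h₀ v v = 0 := by
        rw [← hstarspec η η v v hv hv, h0]
      rw [hv x, ChernAux.herm_null h₀ hadd hsmul hconj hpsd v hvv x]
    · intro h0
      have := hstarspec η η 0 0
        (fun x => by rw [h0 x, ChernAux.zero_right h₀ hsmul hconj x])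
        (fun x => by rw [h0 x, ChernAux.zero_right h₀ hsmul hconj x])
      rw [this, ChernAux.zero_left h₀ hsmul 0]
  -- claim (i)
  have claimi : ∀ x : V, Module.Dual.eval ℂ V x ∈ U₀ ↔ x ∈ V₀ := by
    intro x
    rw [hU, mem_setAnnihilator]
    constructor
    · intro hx
      refine (Subspace.forall_mem_dualAnnihilator_apply_eq_zero_iff V₀ x).1 ?_
      intro φ hφ
      have hφV : ∀ z : V₀, φ z = 0 := fun z =>
        (Submodule.mem_dualAnnihilator φ).1 hφ z z.2
      have hφW : φ ∈ W₀ := (memW φ).2 fun z _ => hφV z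
      have hst : hstar ⟨φ, hφW⟩ ⟨φ, hφW⟩ = 0 := (Mnull ⟨φ, hφW⟩).2 hφV
      have := hx φ ⟨⟨φ, hφW⟩, hst, rfl⟩
      simpa using this
    · intro hx
      rintro _ ⟨η, hη, rfl⟩
      have := (Mnull η).1 hη ⟨x, hx⟩
      simpa using this
  -- claim (iii)
  have claimiii : ∀ (x y : V₀) (hx : Module.Dual.eval ℂ V (x : V) ∈ U₀)
      (hy : Module.Dual.eval ℂ V (y : V) ∈ U₀),
      hss ⟨Module.Dual.eval ℂ V (x : V), hx⟩ ⟨Module.Dual.eval ℂ V (y : V), hy⟩ = h₀ x y := by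
    intro x y hx hy
    obtain ⟨wx, hwx⟩ := extW x
    obtain ⟨wy, hwy⟩ := extW y
    have Px : ∀ η : W₀, ((⟨Module.Dual.eval ℂ V (x : V), hx⟩ : U₀) :
        Module.Dual ℂ (Module.Dual ℂ V)) η = hstar η wx := by
      intro η
      obtain ⟨v, hv⟩ := rep η
      rw [hstarspec η wx v x hv hwx]
      simpa using hv x
    have Py : ∀ η : W₀, ((⟨Module.Dual.eval ℂ V (y : V), hy⟩ : U₀) :
        Module.Dual ℂ (Module.Dual ℂ V)) η = hstar η wy := by
      intro η
      obtain ⟨v, hv⟩ := rep η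
      rw [hstarspec η wy v y hv hwy]
      simpa using hv y
    rw [hssspec ⟨_, hx⟩ ⟨_, hy⟩ wx wy Px Py, hstarspec wy wx y x hwy hwx]
  refine ⟨claimi, ?_, claimiii⟩
  ext x
  simp only [Set.mem_setOf_eq, Set.mem_image]
  constructor
  · rintro ⟨hx, h0⟩
    have hxV : x ∈ V₀ := (claimi x).1 hx
    refine ⟨⟨x, hxV⟩, ?_, rfl⟩
    have := claimiii ⟨x, hxV⟩ ⟨x, hxV⟩ hx hx
    show h₀ _ _ = 0
    rw [← this]
    exact h0
  · rintro ⟨x₀, h0, rfl⟩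
    have hx : Module.Dual.eval ℂ V (x₀ : V) ∈ U₀ := (claimi (x₀ : V)).2 x₀.2
    exact ⟨hx, by rw [claimiii x₀ x₀ hx hx]; exact h0⟩
end

section
/- Define u : ℂ → ℝ ∪ {−∞} by u(z) = Σ_{k=1}^∞ (1/k²)·log(|z − 1/k| + e^{−k³}). Then: (i) for every z ∈ ℂ the series is (absolutely) summable, so u(z) is a finite real number; in particular u(0) > −∞; and (ii) for every x ∈ ℂ with x ≠ 0 there exist a neighborhood U of x and real constants m ≤ M such that m ≤ u(z) ≤ M for all z ∈ U, i.e. u is bounded on a neighborhood of every nonzero point. -/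
/-- The `k`-th term of Demailly's example: `(1/k²)·log(|z − 1/k| + e^{−k³})`. -/
noncomputable def demaillyTerm (k : ℕ) (z : ℂ) : ℝ :=
  (1 / (k : ℝ) ^ 2) * Real.log (‖z - 1 / (k : ℂ)‖ + Real.exp (-(k : ℝ) ^ 3))

/-- Demailly's example `u(z) = ∑_{k=1}^∞ (1/k²)·log(|z − 1/k| + e^{−k³})`. -/
noncomputable def demaillyU (z : ℂ) : ℝ := ∑' k : ℕ, demaillyTerm (k + 1) z

/-!
Each term is at most `log (‖z‖ + 2) / k²`, and at least `log r / k²` whenever `1/k` lies at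
distance `≥ r` from `z`. For a fixed `z` one may take `r = 1/k` for all large `k`, so the series
is dominated by `(log k + C) / k²`. Near a point `x ≠ 0` one may take `r = ‖x‖/4` uniformly for
all large `k`, so the series converges uniformly there; hence `u` is continuous at `x`, and
therefore bounded near `x`.
-/

open Filter Topology

theorem summable_log_div_sq : Summable fun n : ℕ => Real.log n / (n : ℝ) ^ 2 := by
  refine .of_nonneg_of_le (fun n => by positivity) (fun n => ?_)
    ((Real.summable_nat_rpow.mpr (by norm_num : (1 / 2 - 2 : ℝ) < -1)).mul_left 2)
  have hlog : Real.log n ≤ (n : ℝ) ^ (1 / 2 : ℝ) / (1 / 2) :=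
    Real.log_le_rpow_div n.cast_nonneg (by norm_num)
  calc Real.log n / (n : ℝ) ^ 2 ≤ (n : ℝ) ^ (1 / 2 : ℝ) / (1 / 2) / (n : ℝ) ^ 2 := by gcongr
    _ = 2 * (n : ℝ) ^ (1 / 2 - 2 : ℝ) := by
      rw [show (2 : ℝ) = (2 : ℕ) by norm_num, Real.rpow_sub_natCast' n.cast_nonneg (by norm_num)]
      ring

theorem ContinuousAt.exists_mem_nhds_bounds {X : Type*} [TopologicalSpace X] {f : X → ℝ} {x : X}
    (hf : ContinuousAt f x) :
    ∃ U ∈ 𝓝 x, ∃ m M : ℝ, m ≤ M ∧ ∀ z ∈ U, m ≤ f z ∧ f z ≤ M :=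
  ⟨f ⁻¹' Set.Icc (f x - 1) (f x + 1),
    hf.preimage_mem_nhds (Icc_mem_nhds (by linarith) (by linarith)),
    f x - 1, f x + 1, by linarith, fun _ hz => hz⟩

theorem norm_one_div_natCast (k : ℕ) : ‖1 / (k : ℂ)‖ = 1 / k := by
  rw [norm_div, norm_one, Complex.norm_natCast]

theorem le_norm_sub_one_div_natCast {z : ℂ} {k : ℕ} {r : ℝ} (h : r + 1 / k ≤ ‖z‖) :
    r ≤ ‖z - 1 / (k : ℂ)‖ := by
  have := norm_sub_norm_le z (1 / (k : ℂ))
  rw [norm_one_div_natCast] at this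
  linarith

theorem continuous_demaillyTerm (k : ℕ) : Continuous (demaillyTerm k) :=
  continuous_const.mul (.log (by fun_prop) fun z => by positivity)

theorem log_norm_sub_add_exp_le (k : ℕ) {z : ℂ} {R : ℝ} (hR : ‖z‖ ≤ R) :
    Real.log (‖z - 1 / (k : ℂ)‖ + Real.exp (-(k : ℝ) ^ 3)) ≤ Real.log (R + 2) := by
  have hdist : ‖z - 1 / (k : ℂ)‖ ≤ R + 1 := by
    calc ‖z - 1 / (k : ℂ)‖ ≤ ‖z‖ + ‖1 / (k : ℂ)‖ := norm_sub_le _ _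
      _ ≤ R + 1 := by
        rw [norm_one_div_natCast, one_div]
        gcongr
        exact Nat.cast_inv_le_one k
  have hexp : Real.exp (-(k : ℝ) ^ 3) ≤ 1 :=
    Real.exp_le_one_iff.mpr (neg_nonpos.mpr (by positivity))
  exact Real.log_le_log (by positivity) (by linarith)

theorem log_le_log_norm_sub_add_exp {k : ℕ} {z : ℂ} {r : ℝ} (hr : 0 < r)
    (hrz : r ≤ ‖z - 1 / (k : ℂ)‖) :
    Real.log r ≤ Real.log (‖z - 1 / (k : ℂ)‖ + Real.exp (-(k : ℝ) ^ 3)) :=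
  Real.log_le_log hr (hrz.trans (le_add_of_nonneg_right (Real.exp_nonneg _)))

theorem norm_demaillyTerm_le {k : ℕ} {z : ℂ} {r R : ℝ} (hr : 0 < r)
    (hrz : r ≤ ‖z - 1 / (k : ℂ)‖) (hR : ‖z‖ ≤ R) :
    ‖demaillyTerm k z‖ ≤ (|Real.log r| + Real.log (R + 2)) / (k : ℝ) ^ 2 := by
  have hR2 : 0 ≤ Real.log (R + 2) := Real.log_nonneg (by linarith [norm_nonneg z])
  have hlog : |Real.log (‖z - 1 / (k : ℂ)‖ + Real.exp (-(k : ℝ) ^ 3))|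
      ≤ |Real.log r| + Real.log (R + 2) :=
    calc _ ≤ max |Real.log r| |Real.log (R + 2)| :=
          abs_le_max_abs_abs (log_le_log_norm_sub_add_exp hr hrz) (log_norm_sub_add_exp_le k hR)
      _ ≤ |Real.log r| + Real.log (R + 2) := by
          rw [abs_of_nonneg hR2]; exact max_le_add_of_nonneg (abs_nonneg _) hR2
  rw [demaillyTerm, norm_mul, Real.norm_eq_abs, Real.norm_eq_abs, abs_of_nonneg (by positivity),
    one_div_mul_eq_div]
  gcongr

theorem eventually_one_div_le_norm_sub_one_div (z : ℂ) :
    ∀ᶠ k : ℕ in atTop, 1 / (k : ℝ) ≤ ‖z - 1 / (k : ℂ)‖ := by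
  rcases eq_or_ne z 0 with rfl | hz
  · simp
  · filter_upwards [(tendsto_const_div_atTop_nhds_zero_nat 2).eventually
      (gt_mem_nhds (norm_pos_iff.mpr hz))] with k hk
    exact le_norm_sub_one_div_natCast (by linarith [show 2 / (k : ℝ) = 1 / k + 1 / k by ring])

theorem summable_demaillyTerm (z : ℂ) : Summable fun k : ℕ => demaillyTerm (k + 1) z := by
  have hbound : Summable fun k : ℕ => (Real.log k + Real.log (‖z‖ + 2)) / (k : ℝ) ^ 2 := by
    refine (summable_log_div_sq.add
      ((Real.summable_one_div_nat_pow.mpr one_lt_two).mul_left (Real.log (‖z‖ + 2)))).congr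
      fun k => ?_
    ring
  refine (summable_nat_add_iff (f := (demaillyTerm · z)) 1).mpr
    (.of_norm_bounded_eventually_nat hbound ?_)
  filter_upwards [eventually_one_div_le_norm_sub_one_div z, eventually_gt_atTop 0] with k hk hk0
  have := norm_demaillyTerm_le (one_div_pos.mpr (Nat.cast_pos.mpr hk0)) hk le_rfl
  rwa [one_div, Real.log_inv, abs_neg, abs_of_nonneg (Real.log_natCast_nonneg k)] at this

theorem eventually_norm_demaillyTerm_le_on_ball {x : ℂ} (hx : x ≠ 0) :
    ∀ᶠ k : ℕ in atTop, ∀ z ∈ Metric.ball x (‖x‖ / 2),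
      ‖demaillyTerm k z‖ ≤ (|Real.log (‖x‖ / 4)| + Real.log (2 * ‖x‖ + 2)) / (k : ℝ) ^ 2 := by
  have hx0 : 0 < ‖x‖ := norm_pos_iff.mpr hx
  filter_upwards [tendsto_one_div_atTop_nhds_zero_nat.eventually
    (gt_mem_nhds (by positivity : 0 < ‖x‖ / 4))] with k hk z hz
  rw [Metric.mem_ball, dist_eq_norm] at hz
  have hz_lower : ‖x‖ - ‖z - x‖ ≤ ‖z‖ := by
    linarith [norm_sub_norm_le x z, norm_sub_rev z x]
  have hz_upper : ‖z‖ - ‖x‖ ≤ ‖z - x‖ := norm_sub_norm_le z x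
  exact norm_demaillyTerm_le (by positivity) (le_norm_sub_one_div_natCast (by linarith))
    (by linarith)

theorem continuousAt_demaillyU {x : ℂ} (hx : x ≠ 0) : ContinuousAt demaillyU x := by
  set C := |Real.log (‖x‖ / 4)| + Real.log (2 * ‖x‖ + 2)
  have hsum : Summable fun k : ℕ => C / ((k + 1 : ℕ) : ℝ) ^ 2 := by
    simpa only [div_eq_mul_one_div C] using (summable_nat_add_iff 1).mpr
      ((Real.summable_one_div_nat_pow.mpr one_lt_two).mul_left C)
  have hbound : ∀ᶠ k : ℕ in cofinite, ∀ z ∈ Metric.ball x (‖x‖ / 2),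
      ‖demaillyTerm (k + 1) z‖ ≤ C / ((k + 1 : ℕ) : ℝ) ^ 2 := by
    rw [Nat.cofinite_eq_atTop]
    exact (tendsto_add_atTop_nat 1).eventually (eventually_norm_demaillyTerm_le_on_ball hx)
  have hcont : ContinuousOn demaillyU (Metric.ball x (‖x‖ / 2)) :=
    (tendstoUniformlyOn_tsum_of_cofinite_eventually hsum hbound).continuousOn
      (Frequently.of_forall fun s => (continuous_finsetSum s
        fun k _ => continuous_demaillyTerm (k + 1)).continuousOn)
  exact hcont.continuousAt (Metric.ball_mem_nhds x (by positivity))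

/-- For `u(z) = ∑_{k=1}^∞ (1/k²)·log(|z − 1/k| + e^{−k³})`:
(i) for every `z ∈ ℂ` the series is summable, so `u(z)` is a finite real number
(in particular `u(0) > −∞`); and (ii) for every `x ≠ 0` there are a neighborhood `U` of
`x` and constants `m ≤ M` with `m ≤ u(z) ≤ M` on `U`, i.e. `u` is bounded near every
nonzero point. -/
theorem chern_stmt8 :
    (∀ z : ℂ, Summable fun k : ℕ => demaillyTerm (k + 1) z) ∧
    (∀ x : ℂ, x ≠ 0 → ∃ U ∈ nhds x, ∃ m M : ℝ, m ≤ M ∧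
      ∀ z ∈ U, m ≤ demaillyU z ∧ demaillyU z ≤ M) :=
  ⟨summable_demaillyTerm, fun _ hx => (continuousAt_demaillyU hx).exists_mem_nhds_bounds⟩
end
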